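/- Let E₀ = Λ(h) ⋊ ℂℤ₂ for h a 2N-dimensional vector space with basis α¹,…,α^{2N}, κ the ℤ₂-generator acting by parity involution. Define ε : E₀ → ℂ to be nonzero only on the top-degree component multiplied by κ, normalized by ε(α¹⋯α^{2N} κ) = 1. Then ε is a central form on E₀ (ε(ab) = ε(ba) for all a, b) and the induced pairing (a,b) ↦ ε(ab) is non-degenerate, so E₀ is a symmetric Frobenius algebra. -/

import Mathlib

/-!
Write elements of `E₀` in normal form `a + bκ` with `a, b ∈ Λ(h)`. Since `κ a = â κ`, where `â` is
the grade involution, `ε((a + bκ)(c + dκ)) = μ(ad + b ĉ)`. Centrality thus reduces to the twisted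
trace property `μ(xy) = μ(y x̂)`, which holds on monomials of complementary degrees `m + k = 2N`
because the sign `(-1)^(mk)` of graded commutativity equals the sign `(-1)^m` of the involution.
Non-degeneracy reduces to that of `(a, c) ↦ μ(ac)` on `Λ(h)`: pairing with the complementary basis
monomial `e_{sᶜ}` isolates the coefficient of `e_s`, since `e_s e_{sᶜ} = ±α¹⋯α^{2N}`.
-/

open Function

/-- The symplectic vector space `h = ℂ^{2N}` with basis `α¹,…,α^{2N}`. -/
abbrev hsp (N : ℕ) := Fin (2 * N) → ℂ

/-- The exterior algebra `Λ(h)`. -/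
abbrev Lam (N : ℕ) := ExteriorAlgebra ℂ (hsp N)

/-- The top exterior product `α¹ ⋯ α^{2N} ∈ Λ(h)`. -/
noncomputable def topEl (N : ℕ) : Lam N :=
  ((List.finRange (2 * N)).map
    (fun i => ExteriorAlgebra.ι ℂ (Pi.single i 1 : hsp N))).prod

theorem neg_one_pow_mul_of_even_add {R : Type*} [Monoid R] [HasDistribNeg R] {m k : ℕ}
    (h : Even (m + k)) : (-1 : R) ^ (m * k) = (-1) ^ m := by
  rw [pow_mul]
  rcases Nat.even_or_odd m with hm | hm
  · rw [hm.neg_one_pow, one_pow]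
  · have hk : Odd k := by grind
    rw [hm.neg_one_pow, hk.neg_one_pow]

namespace ExteriorAlgebra

variable {R M : Type*} [CommRing R] [AddCommGroup M] [Module R M]

theorem ι_mul_ι_anticomm (v w : M) : ι R v * ι R w = -(ι R w * ι R v) :=
  eq_neg_of_add_eq_zero_left (ι_add_mul_swap v w)

theorem ι_mul_ιMulti_comm (v : M) {n : ℕ} (f : Fin n → M) :
    ι R v * ιMulti R n f = (-1 : R) ^ n • (ιMulti R n f * ι R v) := by
  induction n with
  | zero => simp [ιMulti_zero_apply]
  | succ n ih =>
    rw [ιMulti_succ_apply, ← mul_assoc, ι_mul_ι_anticomm, neg_mul, mul_assoc, ih,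
      mul_smul_comm, ← mul_assoc, pow_succ, mul_neg_one, neg_smul]

theorem ιMulti_mul_ιMulti_comm {m n : ℕ} (f : Fin m → M) (g : Fin n → M) :
    ιMulti R m f * ιMulti R n g = (-1 : R) ^ (m * n) • (ιMulti R n g * ιMulti R m f) := by
  induction m with
  | zero => simp [ιMulti_zero_apply]
  | succ m ih =>
    rw [ιMulti_succ_apply, mul_assoc, ih, mul_smul_comm, ← mul_assoc, ι_mul_ιMulti_comm,
      smul_mul_assoc, mul_assoc, smul_smul, ← pow_add, Nat.succ_mul, add_comm]

theorem involute_ιMulti {n : ℕ} (f : Fin n → M) :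
    CliffordAlgebra.involute (ιMulti R n f) = (-1 : R) ^ n • ιMulti R n f := by
  have h := CliffordAlgebra.involute_prod_map_ι (Q := (0 : QuadraticForm R M)) (List.ofFn f)
  rwa [List.length_ofFn, List.map_ofFn] at h

theorem map_mul_eq_map_mul_involute {d : ℕ} (hd : Even d) (μ : ExteriorAlgebra R M →ₗ[R] R)
    (hμ : ∀ n (f : Fin n → M), n ≠ d → μ (ιMulti R n f) = 0) (a b : ExteriorAlgebra R M) :
    μ (a * b) = μ (b * CliffordAlgebra.involute a) := by
  suffices (LinearMap.mul R _).compr₂ μ =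
      ((LinearMap.mul R _).flip.compr₂ μ) ∘ₗ CliffordAlgebra.involute.toLinearMap from
    LinearMap.congr_fun₂ this a b
  refine LinearMap.ext_on_range (ιMulti_span R M) fun ⟨m, f⟩ =>
    LinearMap.ext_on_range (ιMulti_span R M) fun ⟨k, g⟩ => ?_
  change μ (ιMulti R m f * ιMulti R k g) = μ (ιMulti R k g * CliffordAlgebra.involute _)
  rw [involute_ιMulti, mul_smul_comm, ιMulti_mul_ιMulti_comm f g, map_smul, map_smul]
  by_cases hmk : m + k = d
  · rw [neg_one_pow_mul_of_even_add (hmk ▸ hd)]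
  · rw [ιMulti_mul_ιMulti, hμ _ _ (by omega), smul_zero, smul_zero]

theorem basis_univ_eq_ιMulti {n : ℕ} (b : Module.Basis (Fin n) R M) :
    b.ExteriorAlgebra Finset.univ = ιMulti R n b := by
  have he : Set.powersetCard.ofFinEmbEquiv.symm (Set.powersetCard.ofCard (Finset.card_fin n)) =
      (OrderIso.refl (Fin n)).toOrderEmbedding :=
    (Finset.orderEmbOfFin_unique' _ fun x => Finset.mem_univ x).symm
  rw [basis_apply_ofCard _ (Finset.card_fin n), ιMulti_family, he]
  rfl

section Basis

open Set.powersetCard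

variable {I : Type*} [LinearOrder I] [Fintype I] (b : Module.Basis I R M)
  {μ : ExteriorAlgebra R M →ₗ[R] R}

theorem map_basis_mul_basis_compl_ne_zero (hμ : μ (b.ExteriorAlgebra Finset.univ) ≠ 0)
    (s : Finset I) : μ (b.ExteriorAlgebra s * b.ExteriorAlgebra sᶜ) ≠ 0 := by
  have h := basis_mul_of_disjoint b (ofCard rfl) (ofCard rfl) (disjoint_compl_right (a := s))
  change b.ExteriorAlgebra s * b.ExteriorAlgebra sᶜ =
    _ • b.ExteriorAlgebra (s.disjUnion sᶜ disjoint_compl_right) at h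
  rw [Finset.disjUnion_eq_union, Finset.union_compl] at h
  rwa [h, LinearMap.CompatibleSMul.map_smul, Ne, smul_eq_zero_iff_eq]

theorem map_basis_mul_basis_compl_eq_zero_of_ne
    (hμ : ∀ n (f : Fin n → M), n ≠ Fintype.card I → μ (ιMulti R n f) = 0)
    {s t : Finset I} (hts : t ≠ s) :
    μ (b.ExteriorAlgebra t * b.ExteriorAlgebra sᶜ) = 0 := by
  by_cases hcard : t.card = s.card
  · have hnd : ¬Disjoint t sᶜ := fun hd => hts <|
      Finset.eq_of_subset_of_card_le (disjoint_compl_right_iff.mp hd) hcard.ge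
    exact (congrArg μ (basis_mul_of_not_disjoint b (ofCard rfl) (ofCard rfl) hnd)).trans
      (map_zero μ)
  · rw [basis_apply, basis_apply, ιMulti_mul_ιMulti]
    refine hμ _ _ ?_
    have := s.card_le_univ
    rw [Finset.card_compl]
    omega

theorem eq_zero_of_forall_map_mul_eq_zero [NoZeroDivisors R]
    (hμ : ∀ n (f : Fin n → M), n ≠ Fintype.card I → μ (ιMulti R n f) = 0)
    (hμtop : μ (b.ExteriorAlgebra Finset.univ) ≠ 0) {a : ExteriorAlgebra R M}
    (ha : ∀ c, μ (a * c) = 0) : a = 0 := by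
  refine b.ExteriorAlgebra.forall_coord_eq_zero_iff.mp fun s => ?_
  have h := ha (b.ExteriorAlgebra sᶜ)
  rw [← b.ExteriorAlgebra.sum_repr a, Finset.sum_mul, map_sum,
    Finset.sum_eq_single s (fun t _ hts => by
      rw [smul_mul_assoc, map_smul, map_basis_mul_basis_compl_eq_zero_of_ne b hμ hts, smul_zero])
      (fun hs => absurd (Finset.mem_univ s) hs),
    smul_mul_assoc, map_smul, smul_eq_mul] at h
  exact (mul_eq_zero.mp h).resolve_right (map_basis_mul_basis_compl_ne_zero b hμtop s)

end Basis

end ExteriorAlgebra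

section SmashProduct

open ExteriorAlgebra CliffordAlgebra

variable {R M E : Type*} [CommRing R] [AddCommGroup M] [Module R M] [Ring E] [Algebra R E]
  {j : ExteriorAlgebra R M →ₐ[R] E} {κ : E}

theorem mul_map_eq_map_involute_mul (hκι : ∀ v, κ * j (ι R v) = -(j (ι R v) * κ))
    (a : ExteriorAlgebra R M) : κ * j a = j (involute a) * κ := by
  induction a using ExteriorAlgebra.induction with
  | algebraMap r => rw [AlgHom.commutes, AlgHom.commutes, AlgHom.commutes, Algebra.commutes]
  | ι v => rw [hκι, involute_ι, map_neg, neg_mul]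
  | mul a b ha hb => rw [map_mul, ← mul_assoc, ha, mul_assoc, hb, map_mul, map_mul, mul_assoc]
  | add a b ha hb => rw [map_add, mul_add, ha, hb, map_add, map_add, add_mul]

theorem normalForm_mul_normalForm (hκ2 : κ * κ = 1)
    (hκι : ∀ v, κ * j (ι R v) = -(j (ι R v) * κ)) (a b c d : ExteriorAlgebra R M) :
    (j a + j b * κ) * (j c + j d * κ) =
      j (a * c + b * involute d) + j (a * d + b * involute c) * κ := by
  have hbc (c : ExteriorAlgebra R M) : j b * κ * j c = j (b * involute c) * κ := by
    rw [mul_assoc, mul_map_eq_map_involute_mul hκι, ← mul_assoc, ← map_mul]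
  have hbd : j b * κ * (j d * κ) = j (b * involute d) := by
    rw [← mul_assoc, hbc, mul_assoc, hκ2, mul_one]
  rw [mul_add, add_mul, add_mul, hbc, hbd, ← mul_assoc, ← map_mul, ← map_mul, map_add, map_add,
    add_mul]
  abel

end SmashProduct

theorem smash_product_symmetric_frobenius_general
    (N : ℕ)
    (E : Type) [Ring E] [Algebra ℂ E]
    (j : Lam N →ₐ[ℂ] E)
    (κ : E) (hκ2 : κ * κ = 1)
    (hκι : ∀ v : hsp N, κ * j (ExteriorAlgebra.ι ℂ v) = -(j (ExteriorAlgebra.ι ℂ v) * κ))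
    (hfree : ∀ x : E, ∃! p : Lam N × Lam N, x = j p.1 + j p.2 * κ)
    -- `μ` is the top-degree coefficient on `Λ(h)`:
    (μ : Lam N →ₗ[ℂ] ℂ)
    (hμtop : μ (topEl N) = 1)
    (hμlow : ∀ l : List (hsp N), l.length ≠ 2 * N →
      μ ((l.map (fun v => ExteriorAlgebra.ι ℂ v)).prod) = 0)
    -- `ε` vanishes on `Λ(h)` and restricts to `μ` on `Λ(h)·κ`:
    (ε : E →ₗ[ℂ] ℂ)
    (hε0 : ∀ a : Lam N, ε (j a) = 0)
    (hε1 : ∀ a : Lam N, ε (j a * κ) = μ a) :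
    (∀ x y : E, ε (x * y) = ε (y * x)) ∧
    (∀ x : E, (∀ y : E, ε (x * y) = 0) → x = 0) := by
  have hμ : ∀ n (f : Fin n → hsp N), n ≠ Fintype.card (Fin (2 * N)) →
      μ (ExteriorAlgebra.ιMulti ℂ n f) = 0 := fun n f hn => by
    have h := hμlow (List.ofFn f) (by simpa using hn)
    rwa [List.map_ofFn] at h
  have hbasis : (Pi.basisFun ℂ (Fin (2 * N))).ExteriorAlgebra Finset.univ = topEl N := by
    rw [ExteriorAlgebra.basis_univ_eq_ιMulti, ExteriorAlgebra.ιMulti_apply, List.ofFn_eq_map]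
    simp only [Pi.basisFun_apply, topEl]
  have htwist :=
    ExteriorAlgebra.map_mul_eq_map_mul_involute (even_two_mul N) μ (by simpa using hμ)
  have hnd (a : Lam N) : (∀ c, μ (a * c) = 0) → a = 0 :=
    ExteriorAlgebra.eq_zero_of_forall_map_mul_eq_zero _ hμ
      (by rw [hbasis, hμtop]; exact one_ne_zero)
  have hε (p q : Lam N) : ε (j p + j q * κ) = μ q := by rw [map_add, hε0, hε1, zero_add]
  have hmul := normalForm_mul_normalForm hκ2 hκι
  refine ⟨fun x y => ?_, fun x hx => ?_⟩
  · obtain ⟨⟨a, b⟩, rfl, -⟩ := hfree x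
    obtain ⟨⟨c, d⟩, rfl, -⟩ := hfree y
    rw [hmul, hmul, hε, hε, map_add, map_add, htwist a d, htwist c b, add_comm]
  · obtain ⟨⟨a, b⟩, rfl, -⟩ := hfree x
    have hb : b = 0 := hnd b fun c => by
      obtain ⟨c, rfl⟩ := CliffordAlgebra.involute_involutive.surjective c
      have h := hx (j c + j 0 * κ)
      rwa [hmul, hε, mul_zero, zero_add] at h
    have ha : a = 0 := hnd a fun c => by
      have h := hx (j 0 + j c * κ)
      rwa [hmul, hε, hb, zero_mul, add_zero] at h
    simp [ha, hb]

/-- on the smash product `E₀ = Λ(h) ⋊ ℂℤ₂` (presented abstractly, with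
`κ² = 1`, `κ·ι(v) = −ι(v)·κ` and `E₀` free of rank 2 over `Λ(h)` with basis `1, κ`),
the linear form `ε` vanishing on all of `Λ(h)` and given on `Λ(h)·κ` by the top-degree
coefficient `μ` (normalised by `ε(α¹⋯α^{2N}κ) = 1`) is a central form whose induced
pairing `(a,b) ↦ ε(ab)` is non-degenerate; hence `E₀` is a symmetric Frobenius
algebra. -/
theorem smash_product_symmetric_frobenius
    (N : ℕ) (hN : 0 < N)
    (E : Type) [Ring E] [Algebra ℂ E]
    (j : Lam N →ₐ[ℂ] E) (hj : Injective j)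
    (κ : E) (hκ2 : κ * κ = 1)
    (hκι : ∀ v : hsp N, κ * j (ExteriorAlgebra.ι ℂ v) = -(j (ExteriorAlgebra.ι ℂ v) * κ))
    (hfree : ∀ x : E, ∃! p : Lam N × Lam N, x = j p.1 + j p.2 * κ)
    -- `μ` is the top-degree coefficient on `Λ(h)`:
    (μ : Lam N →ₗ[ℂ] ℂ)
    (hμtop : μ (topEl N) = 1)
    (hμlow : ∀ l : List (hsp N), l.length ≠ 2 * N →
      μ ((l.map (fun v => ExteriorAlgebra.ι ℂ v)).prod) = 0)
    -- `ε` vanishes on `Λ(h)` and restricts to `μ` on `Λ(h)·κ`: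
    (ε : E →ₗ[ℂ] ℂ)
    (hε0 : ∀ a : Lam N, ε (j a) = 0)
    (hε1 : ∀ a : Lam N, ε (j a * κ) = μ a) :
    (∀ x y : E, ε (x * y) = ε (y * x)) ∧
    (∀ x : E, (∀ y : E, ε (x * y) = 0) → x = 0) :=
  smash_product_symmetric_frobenius_general N E j κ hκ2 hκι hfree μ hμtop hμlow ε hε0 hε1
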